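/- arXiv:2104.02254 — 4 statements merged into one kernel-verified Lean document; each statement's English description precedes it below -/
import Mathlib

section
/- For a Gabidulin code G_{n,k}(a) with k + s ≤ n ≤ m generated by a vector a of rank weight n, and a positive integer s, the sum G_{n,k}(a) + G_{n,k}(a)^{[1]} + ... + G_{n,k}(a)^{[s]} equals the Gabidulin code G_{n,k+s}(a). -/
/-
The coordinatewise map `x ↦ x^{[i]}` is semilinear over the `i`-th power of the `q`-Frobenius,
which is an automorphism of `K` because `K` is algebraic over the finite field `F_q`. Hence it
maps `G_{n,k}(a)` onto the span of `a^{[i]}, …, a^{[i+k-1]}`, and for `i = 0, …, s` these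
generating families together run through `a^{[0]}, …, a^{[k+s-1]}`.
-/

open Pointwise

/-- The Gabidulin code `G_{n,k}(a)`: the `K`-span of `a, a^{[1]}, …, a^{[k-1]}`. -/
def gab (K : Type*) [Field K] (q k : ℕ) {n : ℕ} (a : Fin n → K) :
    Submodule K (Fin n → K) :=
  Submodule.span K (Set.range fun s : Fin k => fun j => a j ^ q ^ (s : ℕ))

theorem Submodule.sum_coe_span {R M ι : Type*} [Semiring R] [AddCommMonoid M] [Module R M]
    (t : Finset ι) (S : ι → Set M) :
    ∑ i ∈ t, (span R (S i) : Set M) = span R (⋃ i ∈ t, S i) := by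
  classical
  induction t using Finset.induction with
  | empty => simp [← Set.singleton_zero]
  | insert i t hi ih =>
    rw [Finset.sum_insert hi, ih, ← coe_sup, ← span_union, Finset.set_biUnion_insert]

theorem Set.biUnion_range_shift_eq_range {α : Type*} (g : ℕ → α) {k : ℕ} (hk : 1 ≤ k) (s : ℕ) :
    ⋃ i ∈ Finset.range (s + 1), range (fun t : Fin k => g (t + i))
      = range (fun t : Fin (k + s) => g t) := by
  ext x
  simp only [mem_iUnion, mem_range, Finset.mem_range]
  constructor
  · rintro ⟨i, hi, t, rfl⟩
    exact ⟨⟨t + i, by omega⟩, rfl⟩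
  · rintro ⟨j, rfl⟩
    by_cases hj : (j : ℕ) < k
    · exact ⟨0, by omega, ⟨j, hj⟩, rfl⟩
    · exact ⟨j - (k - 1), by omega, ⟨k - 1, by omega⟩, congrArg g (Nat.add_sub_cancel' (by omega))⟩

def RingHom.piSemilinearMap {R S : Type*} [Semiring R] [Semiring S] (σ : R →+* S) (ι : Type*) :
    (ι → R) →ₛₗ[σ] (ι → S) where
  toFun x j := σ (x j)
  map_add' x y := funext fun j => map_add σ (x j) (y j)
  map_smul' c x := funext fun j => map_mul σ c (x j)

theorem image_frobenius_pow_gab {Fq K : Type*} [Field Fq] [Fintype Fq] [Field K] [Algebra Fq K]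
    [Algebra.IsAlgebraic Fq K] {n : ℕ} (k i : ℕ) (a : Fin n → K) :
    (fun x : Fin n → K => fun j => x j ^ Fintype.card Fq ^ i) '' gab K (Fintype.card Fq) k a
      = Submodule.span K
          (Set.range fun t : Fin k => fun j => a j ^ Fintype.card Fq ^ ((t : ℕ) + i)) := by
  let σ : K ≃+* K := ((FiniteField.frobeniusAlgEquivOfAlgebraic Fq K) ^ i : K ≃ₐ[Fq] K)
  have hσ (x : K) : σ x = x ^ Fintype.card Fq ^ i := by
    simp [σ, AlgEquiv.coe_pow, FiniteField.coe_frobeniusAlgEquivOfAlgebraic_iterate]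
  have hf : (fun x : Fin n → K => fun j => x j ^ Fintype.card Fq ^ i)
      = (σ : K →+* K).piSemilinearMap (Fin n) := by
    funext x j
    exact (hσ _).symm
  rw [hf, ← Submodule.map_coe, gab, Submodule.map_span, ← Set.range_comp]
  congr 3
  funext t j
  simp [RingHom.piSemilinearMap, hσ, ← pow_mul, ← pow_add]

theorem gab_sum_frob_powers_general {Fq K : Type*} [Field Fq] [Fintype Fq] [Field K]
    [Algebra Fq K] {n k s : ℕ} (hk : 1 ≤ k) (hkn : k + s ≤ n)
    (hnm : n ≤ Module.finrank Fq K)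
    (a : Fin n → K) :
    (∑ i ∈ Finset.range (s + 1),
        (fun x : Fin n → K => fun j => x j ^ Fintype.card Fq ^ i) ''
          ↑(gab K (Fintype.card Fq) k a) : Set (Fin n → K))
      = ↑(gab K (Fintype.card Fq) (k + s) a) := by
  have : Module.Finite Fq K := Module.finite_of_finrank_pos (by omega)
  simp_rw [image_frobenius_pow_gab, Submodule.sum_coe_span,
    Set.biUnion_range_shift_eq_range (fun l j => a j ^ Fintype.card Fq ^ l) hk, gab]

/-- for a Gabidulin code `G_{n,k}(a)` with `k + s ≤ n ≤ m`
generated by `a` of rank weight `n`, and `s ≥ 1`, the pointwise sum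
`G_{n,k}(a) + G_{n,k}(a)^{[1]} + ⋯ + G_{n,k}(a)^{[s]}` equals `G_{n,k+s}(a)`. -/
theorem gab_sum_frob_powers {Fq K : Type*} [Field Fq] [Fintype Fq] [Field K]
    [Algebra Fq K] {n k s : ℕ} (hk : 1 ≤ k) (hs : 1 ≤ s) (hkn : k + s ≤ n)
    (hnm : n ≤ Module.finrank Fq K)
    (a : Fin n → K) (ha : LinearIndependent Fq a) :
    (∑ i ∈ Finset.range (s + 1),
        (fun x : Fin n → K => fun j => x j ^ Fintype.card Fq ^ i) ''
          ↑(gab K (Fintype.card Fq) k a) : Set (Fin n → K))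
      = ↑(gab K (Fintype.card Fq) (k + s) a) :=
  gab_sum_frob_powers_general hk hkn hnm a
end

section
/- The Gabidulin code G_{n,k}(a) is an MRD code: its minimum rank distance equals n-k+1; equivalently, every nonzero codeword of G_{n,k}(a) has rank weight at least n-k+1. -/
/-- The rank weight of a vector over the extension `K / Fq`. -/
noncomputable def rankWeight (Fq : Type*) {K : Type*} [Field Fq] [Field K]
    [Algebra Fq K] {n : ℕ} (x : Fin n → K) : ℕ :=
  Module.finrank Fq (Submodule.span Fq (Set.range x))

/-!
A codeword of `G_{n,k}(a)` is `(L a₁, …, L aₙ)` for a linearized polynomial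
`L = ∑_{s<k} λ_s X^{q^s}`, which is an `F_q`-linear map `K → K`. Its kernel consists of roots of
a nonzero polynomial of degree at most `q^(k-1)`, so it has `F_q`-dimension at most `k - 1`; by
rank–nullity on `span(a)` the rank weight of the codeword is `n - dim (span(a) ∩ ker L)`, hence at
least `n - k + 1`. The bound is attained by a nonzero `λ` with `L a₁ = ⋯ = L a_{k-1} = 0`, which
exists since these are `k - 1` linear equations in `k` unknowns.
-/

open Polynomial Module Submodule

section LinearizedPolynomial

variable {R : Type*} [Semiring R] {k : ℕ}

noncomputable def linearizedPoly (q : ℕ) (lam : Fin k → R) : R[X] :=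
  ∑ s : Fin k, C (lam s) * X ^ q ^ (s : ℕ)

theorem eval_linearizedPoly (q : ℕ) (lam : Fin k → R) (x : R) :
    (linearizedPoly q lam).eval x = ∑ s : Fin k, lam s * x ^ q ^ (s : ℕ) := by
  simp [linearizedPoly, eval_finsetSum]

theorem coeff_linearizedPoly_pow {q : ℕ} (hq : 1 < q) (lam : Fin k → R) (s : Fin k) :
    (linearizedPoly q lam).coeff (q ^ (s : ℕ)) = lam s := by
  simp [linearizedPoly, (Nat.pow_right_injective hq).eq_iff, Fin.val_inj]

theorem linearizedPoly_ne_zero {q : ℕ} (hq : 1 < q) {lam : Fin k → R} (hlam : lam ≠ 0) :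
    linearizedPoly q lam ≠ 0 := by
  obtain ⟨s, hs⟩ := Function.ne_iff.mp hlam
  refine fun h => hs ?_
  rw [← coeff_linearizedPoly_pow hq lam s, h, coeff_zero, Pi.zero_apply]

theorem natDegree_linearizedPoly_le {q : ℕ} (hq : 1 ≤ q) (lam : Fin k → R) :
    (linearizedPoly q lam).natDegree ≤ q ^ (k - 1) := by
  refine natDegree_sum_le_of_forall_le _ _ fun s _ =>
    ((natDegree_C_mul_le _ _).trans (natDegree_X_pow_le _)).trans ?_
  exact Nat.pow_le_pow_right hq (by omega)

end LinearizedPolynomial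

section LinearizedMap

variable {K : Type*} [Field K] {k : ℕ}

noncomputable def linearizedMap (Fq : Type*) [Field Fq] [Fintype Fq] [Algebra Fq K]
    (lam : Fin k → K) : K →ₗ[Fq] K :=
  ∑ s : Fin k, lam s • (FiniteField.frobeniusAlgHom Fq K ^ (s : ℕ)).toLinearMap

variable {Fq : Type*} [Field Fq] [Fintype Fq] [Algebra Fq K]

theorem linearizedMap_apply (lam : Fin k → K) (x : K) :
    linearizedMap Fq lam x = ∑ s : Fin k, lam s * x ^ Fintype.card Fq ^ (s : ℕ) := by
  simp [linearizedMap, FiniteField.coe_frobeniusAlgHom, pow_iterate]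

theorem finrank_le_of_le_ker_linearizedMap {lam : Fin k → K} (hlam : lam ≠ 0)
    {W : Submodule Fq K} (hW : W ≤ LinearMap.ker (linearizedMap Fq lam)) :
    finrank Fq W ≤ k - 1 := by
  classical
  have hq : 1 < Fintype.card Fq := Fintype.one_lt_card
  set P := linearizedPoly (Fintype.card Fq) lam
  have hP : P ≠ 0 := linearizedPoly_ne_zero hq hlam
  have hroots : (W : Set K) ⊆ P.roots.toFinset := fun x hx => by
    rw [Finset.mem_coe, Multiset.mem_toFinset, mem_roots hP, IsRoot, eval_linearizedPoly,
      ← linearizedMap_apply]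
    exact hW hx
  have : Finite W := (P.roots.toFinset.finite_toSet.subset hroots).to_subtype
  have : Module.Finite Fq W := Module.Finite.of_finite
  have hcard : Fintype.card Fq ^ finrank Fq W ≤ Fintype.card Fq ^ (k - 1) :=
    calc Fintype.card Fq ^ finrank Fq W = Nat.card W := by
          rw [natCard_eq_pow_finrank (K := Fq), Nat.card_eq_fintype_card]
      _ ≤ P.roots.toFinset.card := by
          rw [← Set.ncard_coe_finset, ← Nat.card_coe_set_eq]
          exact Set.ncard_le_ncard hroots (Finset.finite_toSet _)
      _ ≤ P.natDegree := (Multiset.toFinset_card_le _).trans P.card_roots'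
      _ ≤ Fintype.card Fq ^ (k - 1) := natDegree_linearizedPoly_le hq.le lam
  exact (Nat.pow_le_pow_iff_right hq).mp hcard

end LinearizedMap

theorem Submodule.finrank_map_add_finrank_inf_ker {F V W : Type*} [DivisionRing F]
    [AddCommGroup V] [Module F V] [AddCommGroup W] [Module F W] (f : V →ₗ[F] W)
    (U : Submodule F V) [FiniteDimensional F U] :
    finrank F (U.map f) + finrank F ↥(U ⊓ LinearMap.ker f) = finrank F U := by
  have := (f.domRestrict U).finrank_range_add_finrank_ker
  rwa [LinearMap.range_domRestrict, LinearMap.ker_domRestrict, ← finrank_map_subtype_eq,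
    map_comap_subtype] at this

theorem rankWeight_comp_add_finrank_inf_ker {Fq K V : Type*} [Field Fq] [Field K]
    [Algebra Fq K] [AddCommGroup V] [Module Fq V] {n : ℕ} (f : V →ₗ[Fq] K) (a : Fin n → V) :
    rankWeight Fq (f ∘ a) + finrank Fq ↥(span Fq (Set.range a) ⊓ LinearMap.ker f)
      = finrank Fq (span Fq (Set.range a)) := by
  have := FiniteDimensional.span_of_finite Fq (Set.finite_range a)
  rw [rankWeight, Set.range_comp, ← map_span]
  exact finrank_map_add_finrank_inf_ker f _

theorem le_finrank_inf_ker_of_forall_castLE {F V W : Type*} [DivisionRing F] [AddCommGroup V]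
    [Module F V] [AddCommGroup W] [Module F W] {f : V →ₗ[F] W} {m n : ℕ} {hmn : m ≤ n}
    {a : Fin n → V} (ha : LinearIndependent F a) (hf : ∀ j, f ((a ∘ Fin.castLE hmn) j) = 0) :
    m ≤ finrank F ↥(span F (Set.range a) ⊓ LinearMap.ker f) := by
  have := FiniteDimensional.span_of_finite F (Set.finite_range a)
  have hsub :
      span F (Set.range (a ∘ Fin.castLE hmn)) ≤ span F (Set.range a) ⊓ LinearMap.ker f :=
    span_le.2 (Set.range_subset_iff.2 fun j => ⟨subset_span ⟨_, rfl⟩, hf j⟩)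
  simpa [finrank_span_eq_card (ha.comp _ (Fin.castLE_injective hmn))] using finrank_mono hsub

theorem rankWeight_zero (Fq : Type*) {K : Type*} [Field Fq] [Field K] [Algebra Fq K] {n : ℕ} :
    rankWeight Fq (0 : Fin n → K) = 0 := by
  rw [rankWeight, span_eq_bot.2 (by rintro _ ⟨j, rfl⟩; rfl), finrank_bot]

section Gabidulin

variable {Fq K : Type*} [Field Fq] [Fintype Fq] [Field K] [Algebra Fq K] {n k : ℕ}

theorem mem_gab_iff {a : Fin n → K} {c : Fin n → K} :
    c ∈ gab K (Fintype.card Fq) k a ↔ ∃ lam : Fin k → K, c = linearizedMap Fq lam ∘ a := by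
  rw [gab, mem_span_range_iff_exists_fun]
  refine exists_congr fun lam => ⟨fun h => ?_, fun h => ?_⟩ <;> subst h <;> ext j <;>
    simp [linearizedMap_apply, Finset.sum_apply]

theorem exists_ne_zero_linearizedMap_eq_zero {m : ℕ} (b : Fin m → K) (hm : m < k) :
    ∃ lam : Fin k → K, lam ≠ 0 ∧ ∀ j, linearizedMap Fq lam (b j) = 0 := by
  let T := Fintype.linearCombination K
    fun (s : Fin k) (j : Fin m) => b j ^ Fintype.card Fq ^ (s : ℕ)
  obtain ⟨lam, hlam, hlam0⟩ :=
    (Submodule.ne_bot_iff _).1 (T.ker_ne_bot_of_finrank_lt (by simpa using hm))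
  refine ⟨lam, hlam0, fun j => ?_⟩
  simpa [T, linearizedMap_apply, Fintype.linearCombination_apply, Finset.sum_apply] using
    congrFun (LinearMap.mem_ker.1 hlam) j

theorem rankWeight_linearizedMap_comp_add {a : Fin n → K} (ha : LinearIndependent Fq a)
    (lam : Fin k → K) :
    rankWeight Fq (linearizedMap Fq lam ∘ a)
      + finrank Fq ↥(span Fq (Set.range a) ⊓ LinearMap.ker (linearizedMap Fq lam)) = n := by
  rw [rankWeight_comp_add_finrank_inf_ker, finrank_span_eq_card ha, Fintype.card_fin]

end Gabidulin

theorem gab_is_MRD_general {Fq K : Type*} [Field Fq] [Fintype Fq] [Field K] [Algebra Fq K]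
    {n k : ℕ} (hk : 1 ≤ k) (hkn : k ≤ n)
    (a : Fin n → K) (ha : LinearIndependent Fq a) :
    (∀ c ∈ gab K (Fintype.card Fq) k a, c ≠ 0 → n - k + 1 ≤ rankWeight Fq c)
      ∧ ∃ c ∈ gab K (Fintype.card Fq) k a, c ≠ 0 ∧ rankWeight Fq c = n - k + 1 := by
  have hker_le (lam : Fin k → K) (hlam : lam ≠ 0) :
      finrank Fq ↥(span Fq (Set.range a) ⊓ LinearMap.ker (linearizedMap Fq lam)) ≤ k - 1 :=
    finrank_le_of_le_ker_linearizedMap hlam inf_le_right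
  refine ⟨fun c hc hc0 => ?_, ?_⟩
  · obtain ⟨lam, rfl⟩ := mem_gab_iff.1 hc
    have hlam : lam ≠ 0 := by rintro rfl; exact hc0 (by ext; simp [linearizedMap])
    have := hker_le lam hlam
    have := rankWeight_linearizedMap_comp_add ha lam
    omega
  · obtain ⟨lam, hlam, hvan⟩ := exists_ne_zero_linearizedMap_eq_zero (Fq := Fq)
      (a ∘ Fin.castLE (Nat.sub_le k 1 |>.trans hkn)) (Nat.sub_lt hk one_pos)
    have hlow := le_finrank_inf_ker_of_forall_castLE ha hvan
    have hup := hker_le lam hlam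
    have hrw : rankWeight Fq (linearizedMap Fq lam ∘ a) = n - k + 1 := by
      have := rankWeight_linearizedMap_comp_add ha lam
      omega
    refine ⟨linearizedMap Fq lam ∘ a, mem_gab_iff.2 ⟨lam, rfl⟩, fun h0 => ?_, hrw⟩
    rw [h0, rankWeight_zero] at hrw
    omega

/-- the Gabidulin code `G_{n,k}(a)` is MRD: every nonzero
codeword has rank weight at least `n - k + 1`, and its minimum rank distance
equals `n - k + 1`. -/
theorem gab_is_MRD {Fq K : Type*} [Field Fq] [Fintype Fq] [Field K] [Algebra Fq K]
    {n k : ℕ} (hk : 1 ≤ k) (hkn : k ≤ n) (hnm : n ≤ Module.finrank Fq K)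
    (a : Fin n → K) (ha : LinearIndependent Fq a) :
    (∀ c ∈ gab K (Fintype.card Fq) k a, c ≠ 0 → n - k + 1 ≤ rankWeight Fq c)
      ∧ ∃ c ∈ gab K (Fintype.card Fq) k a, c ≠ 0 ∧ rankWeight Fq c = n - k + 1 :=
  gab_is_MRD_general hk hkn a ha
end

section
/- A k×n Moore matrix over F_{q^m} generated by a vector a with rank weight n (coordinates linearly independent over F_q) has rank k, provided k ≤ n ≤ m. -/
/-!
A nontrivial `K`-linear relation `∑ₛ gₛ aⱼ^(q^s) = 0` among the rows says that every `aⱼ` is a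
root of the linearized polynomial `P = ∑ₛ gₛ X^(q^s)`, a nonzero polynomial of degree at most
`q^(k-1)`. Since `x ↦ x^q` is `F_q`-linear, so is evaluation of `P`, hence all `q^n` elements of
the `F_q`-span of the `aⱼ` are roots of `P`, which is impossible as `q^(k-1) < q^n`.
-/

open Polynomial

namespace Polynomial

variable {R : Type*} [CommRing R] {k q : ℕ}

noncomputable def linearized (q : ℕ) (g : Fin k → R) : R[X] :=
  ∑ s, C (g s) * X ^ q ^ (s : ℕ)

variable (g : Fin k → R)

theorem eval_linearized (x : R) : (linearized q g).eval x = ∑ s, g s * x ^ q ^ (s : ℕ) := by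
  simp [linearized, eval_finsetSum]

theorem coeff_linearized_pow (hq : 1 < q) (s : Fin k) :
    (linearized q g).coeff (q ^ (s : ℕ)) = g s := by
  rw [linearized, finsetSum_coeff, Finset.sum_eq_single s]
  · simp
  · intro t _ hts
    rw [coeff_C_mul_X_pow, if_neg fun h => hts (Fin.ext (Nat.pow_right_injective hq h).symm)]
  · simp

theorem linearized_ne_zero (hq : 1 < q) {g : Fin k → R} (hg : g ≠ 0) : linearized q g ≠ 0 := by
  obtain ⟨s, hs⟩ := Function.ne_iff.mp hg
  intro h
  exact hs (by rw [← coeff_linearized_pow g hq s, h, coeff_zero]; rfl)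

theorem natDegree_linearized_le (hq : 0 < q) : (linearized q g).natDegree ≤ q ^ (k - 1) :=
  natDegree_sum_le_of_forall_le _ _ fun s _ =>
    (natDegree_C_mul_X_pow_le _ _).trans (Nat.pow_le_pow_right hq (by omega))

end Polynomial

section FiniteField

variable (Fq : Type*) {K : Type*} [Field Fq] [Fintype Fq] {k : ℕ}

section CommRing

variable [CommRing K] [Algebra Fq K]

theorem FiniteField.frobeniusAlgHom_pow_apply (s : ℕ) (x : K) :
    (FiniteField.frobeniusAlgHom Fq K ^ s) x = x ^ Fintype.card Fq ^ s := by
  rw [AlgHom.coe_pow, FiniteField.coe_frobeniusAlgHom, pow_iterate]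

noncomputable def linearizedLinearMap (g : Fin k → K) : K →ₗ[Fq] K :=
  ∑ s, g s • (FiniteField.frobeniusAlgHom Fq K ^ (s : ℕ)).toLinearMap

theorem linearizedLinearMap_apply (g : Fin k → K) (x : K) :
    linearizedLinearMap Fq g x = (linearized (Fintype.card Fq) g).eval x := by
  simp only [linearizedLinearMap, LinearMap.coe_sum, Finset.sum_apply, LinearMap.smul_apply,
    AlgHom.toLinearMap_apply, FiniteField.frobeniusAlgHom_pow_apply, smul_eq_mul, eval_linearized]

end CommRing

variable {Fq} [Field K] [Algebra Fq K] {n : ℕ} {a : Fin n → K}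

theorem card_pow_le_natDegree_linearized (ha : LinearIndependent Fq a) {g : Fin k → K}
    (hg : linearized (Fintype.card Fq) g ≠ 0)
    (hroots : ∀ j, (linearized (Fintype.card Fq) g).eval (a j) = 0) :
    Fintype.card Fq ^ n ≤ (linearized (Fintype.card Fq) g).natDegree := by
  classical
  set span := Finset.univ.image (Fintype.linearCombination Fq a)
  have hspan : span.card = Fintype.card Fq ^ n := by
    rw [Finset.card_image_of_injective _ ha.fintypeLinearCombination_injective]
    simp
  rw [← hspan]
  refine card_le_degree_of_subset_roots fun x hx => ?_
  obtain ⟨t, -, rfl⟩ := Finset.mem_image.mp hx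
  rw [mem_roots hg, IsRoot, ← linearizedLinearMap_apply, Fintype.linearCombination_apply, map_sum]
  simp [linearizedLinearMap_apply, hroots]

theorem linearIndependent_moore_rows (hkn : k ≤ n) (ha : LinearIndependent Fq a) :
    LinearIndependent K fun (s : Fin k) (j : Fin n) => a j ^ Fintype.card Fq ^ (s : ℕ) := by
  rw [Fintype.linearIndependent_iff]
  intro g hg
  by_contra! ⟨s, hs⟩
  have hq : 1 < Fintype.card Fq := Fintype.one_lt_card
  have hk : k - 1 < n := by have := s.pos; omega
  have hroots : ∀ j, (linearized (Fintype.card Fq) g).eval (a j) = 0 := fun j => by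
    simpa [eval_linearized] using congrFun hg j
  have hdeg := (card_pow_le_natDegree_linearized ha
    (linearized_ne_zero hq (Function.ne_iff.mpr ⟨s, hs⟩)) hroots).trans
    (natDegree_linearized_le g (by omega))
  exact (Nat.pow_lt_pow_right hq hk).not_ge hdeg

end FiniteField

theorem moore_matrix_rank_general {Fq K : Type*} [Field Fq] [Fintype Fq] [Field K]
    [Algebra Fq K] {n k : ℕ} (hkn : k ≤ n)
    (a : Fin n → K) (ha : LinearIndependent Fq a) :
    Matrix.rank (Matrix.of fun s : Fin k => fun j : Fin n =>
      a j ^ Fintype.card Fq ^ (s : ℕ)) = k :=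
  (linearIndependent_moore_rows hkn ha).rank_matrix.trans (Fintype.card_fin k)

/-- a `k × n` Moore matrix over `K = F_{q^m}` generated by a
vector `a` whose coordinates are linearly independent over `Fq` has rank `k`,
provided `k ≤ n ≤ m`. -/
theorem moore_matrix_rank {Fq K : Type*} [Field Fq] [Fintype Fq] [Field K]
    [Algebra Fq K] {n k : ℕ} (hkn : k ≤ n) (hnm : n ≤ Module.finrank Fq K)
    (a : Fin n → K) (ha : LinearIndependent Fq a) :
    Matrix.rank (Matrix.of fun s : Fin k => fun j : Fin n =>
      a j ^ Fintype.card Fq ^ (s : ℕ)) = k :=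
  moore_matrix_rank_general hkn a ha
end

section
/- Let G be a generator matrix of an [n,k] Gabidulin code G_{n,k}(a) over F_{q^m} with minimum rank distance n-k+1, and let M be a k×n matrix over F_{q^m} with F_q-column rank l satisfying l < n-k+1. Then the matrix G_M = G + M has full rank k. -/
open Module Submodule Matrix

noncomputable def Matrix.colRank (Fq : Type*) {K ι κ : Type*} [Field Fq] [Field K]
    [Algebra Fq K] (A : Matrix ι κ K) : ℕ :=
  finrank Fq (span Fq (Set.range A.col))

section

variable (Fq : Type*) {K ι : Type*} [Field Fq] [Field K] [Algebra Fq K] [Fintype ι] {n : ℕ}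

theorem rankWeight_vecMul_le_colRank (x : ι → K) (A : Matrix ι (Fin n) K) :
    rankWeight Fq (x ᵥ* A) ≤ A.colRank Fq := by
  let f : (ι → K) →ₗ[Fq] K := (dotProductBilin K K x).restrictScalars Fq
  have hrange : Set.range (x ᵥ* A) = f '' Set.range A.col := by
    rw [← Set.range_comp]
    rfl
  have := Module.Finite.span_of_finite Fq (Set.finite_range A.col)
  rw [rankWeight, hrange, span_image]
  exact finrank_map_le f _

theorem linearIndependent_add_of_colRank_lt {C : Submodule K (Fin n → K)} {d : ℕ}
    (hC : ∀ c ∈ C, c ≠ 0 → d ≤ rankWeight Fq c) {G : Matrix ι (Fin n) K}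
    (hG : LinearIndependent K G.row) (hGC : ∀ i, G i ∈ C) {A : Matrix ι (Fin n) K}
    (hA : A.colRank Fq < d) : LinearIndependent K (G + A).row := by
  rw [← vecMul_injective_iff] at hG ⊢
  refine (injective_iff_map_eq_zero (G + A).vecMulLinear).2 fun x hx => ?_
  by_contra hx0
  have hxG : x ᵥ* G = (-x) ᵥ* A := by
    rw [neg_vecMul, eq_neg_iff_add_eq_zero, ← vecMul_add]
    exact hx
  have hmem : x ᵥ* G ∈ C := by
    rw [vecMul_eq_sum]
    exact sum_mem fun i _ => smul_mem _ _ (hGC i)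
  have hne : x ᵥ* G ≠ 0 := fun h => hx0 (hG (h.trans (zero_vecMul G).symm))
  have hlow := hC _ hmem hne
  have hhigh := hxG ▸ rankWeight_vecMul_le_colRank Fq (-x) A
  omega

end

theorem rank_add_low_colRank_general {Fq K : Type*} [Field Fq] [Fintype Fq] [Field K]
    [Algebra Fq K] {n k l : ℕ}
    (a : Fin n → K)
    (G : Fin k → Fin n → K) (hGli : LinearIndependent K G)
    (hGgen : Submodule.span K (Set.range G) = gab K (Fintype.card Fq) k a)
    (hMRD : ∀ c ∈ gab K (Fintype.card Fq) k a, c ≠ 0 → n - k + 1 ≤ rankWeight Fq c)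
    (M : Fin k → Fin n → K)
    (hClr : Module.finrank Fq
        (Submodule.span Fq (Set.range fun j => fun i => M i j)) = l)
    (hl : l < n - k + 1) :
    Matrix.rank (Matrix.of fun i j => G i j + M i j) = k := by
  have hGC : ∀ i, G i ∈ gab K (Fintype.card Fq) k a := fun i =>
    hGgen ▸ subset_span ⟨i, rfl⟩
  have hli := linearIndependent_add_of_colRank_lt Fq hMRD (G := of G) hGli hGC
    (A := of M) (hClr.trans_lt hl)
  exact hli.rank_matrix.trans (Fintype.card_fin k)

/-- if `G` is a (full-rank) generator matrix of an `[n,k]`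
Gabidulin code with minimum rank distance `n - k + 1`, and `M` is a `k × n`
matrix over `K` of `Fq`-column rank `l < n - k + 1`, then `G_M = G + M`
has full rank `k`. -/
theorem rank_add_low_colRank {Fq K : Type*} [Field Fq] [Fintype Fq] [Field K]
    [Algebra Fq K] {n k l : ℕ} (hk : 1 ≤ k) (hkn : k < n)
    (hnm : n ≤ Module.finrank Fq K)
    (a : Fin n → K) (ha : LinearIndependent Fq a)
    (G : Fin k → Fin n → K) (hGli : LinearIndependent K G)
    (hGgen : Submodule.span K (Set.range G) = gab K (Fintype.card Fq) k a)
    (hMRD : ∀ c ∈ gab K (Fintype.card Fq) k a, c ≠ 0 → n - k + 1 ≤ rankWeight Fq c)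
    (M : Fin k → Fin n → K)
    (hClr : Module.finrank Fq
        (Submodule.span Fq (Set.range fun j => fun i => M i j)) = l)
    (hl : l < n - k + 1) :
    Matrix.rank (Matrix.of fun i j => G i j + M i j) = k :=
  rank_add_low_colRank_general a G hGli hGgen hMRD M hClr hl
end
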